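/- arXiv:2101.10746 — 2 statements merged into one kernel-verified Lean document; each statement's English description precedes it below -/
import Mathlib

section
/- Define the hybrid number h(m) of a positive integer m as the minimum number of hybrid vertices over all binary phylogenetic networks with a single leaf x for which the number of directed root-to-leaf paths equals m. Then h(m) ≤ ⌊log₂ m⌋ + s₂(m) − 1, where s₂(m) is the binary digit-sum of m, and h(2^k) = k for every k ≥ 1. -/
/-- A directed path in a multidigraph with arc multiplicities `arcs`. -/
inductive PathIn (V : Type) (arcs : V → V → ℕ) : V → V → Type
  | nil (v : V) : PathIn V arcs v v
  | cons {u v w : V} (e : Fin (arcs u v)) (p : PathIn V arcs v w) : PathIn V arcs u w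

/-- A finite rooted directed acyclic multigraph (parallel arcs allowed, no loops by acyclicity);
the field `rank` witnesses acyclicity via a topological order. -/
structure PhyloNet where
  V : Type
  fin : Fintype V
  root : V
  arcs : V → V → ℕ
  rank : V → ℕ
  rank_lt : ∀ u v : V, 0 < arcs u v → rank u < rank v

attribute [instance] PhyloNet.fin

namespace PhyloNet

def indeg (N : PhyloNet) (v : N.V) : ℕ := ∑ u : N.V, N.arcs u v

def outdeg (N : PhyloNet) (v : N.V) : ℕ := ∑ u : N.V, N.arcs v u

/-- The number of directed paths from `u` to `v`. -/
noncomputable def pathCount (N : PhyloNet) (u v : N.V) : ℕ := Nat.card (PathIn N.V N.arcs u v)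

def IsLeaf (N : PhyloNet) (v : N.V) : Prop := N.indeg v = 1 ∧ N.outdeg v = 0

/-- A binary phylogenetic network: root indeg 0 outdeg 2; other vertices are leaves,
tree vertices, or (binary) hybrid vertices. -/
def IsBinary (N : PhyloNet) : Prop :=
  N.indeg N.root = 0 ∧ N.outdeg N.root = 2 ∧
  ∀ v : N.V, v ≠ N.root →
    (N.indeg v = 1 ∧ N.outdeg v = 0) ∨
    (N.indeg v = 1 ∧ N.outdeg v = 2) ∨
    (N.indeg v = 2 ∧ N.outdeg v = 1)

/-- A (general) phylogenetic network: hybrid vertices may have indegree ≥ 2. -/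
def IsPhylo (N : PhyloNet) : Prop :=
  N.indeg N.root = 0 ∧ N.outdeg N.root = 2 ∧
  ∀ v : N.V, v ≠ N.root →
    (N.indeg v = 1 ∧ N.outdeg v = 0) ∨
    (N.indeg v = 1 ∧ N.outdeg v = 2) ∨
    (2 ≤ N.indeg v ∧ N.outdeg v = 1)

/-- The number of hybrid vertices. -/
noncomputable def hybridCard (N : PhyloNet) : ℕ := Nat.card {v : N.V // 2 ≤ N.indeg v}

/-- The hybrid number `h(N) = ∑_{h hybrid} (indeg h − 1)`; vertices of indegree ≤ 1
contribute 0 via truncated subtraction. -/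
def hybridNumber (N : PhyloNet) : ℕ := ∑ v : N.V, (N.indeg v - 1)

/-- `x` is the unique leaf of `N`. -/
def SingleLeaf (N : PhyloNet) (x : N.V) : Prop := N.IsLeaf x ∧ ∀ y : N.V, N.IsLeaf y → y = x

/-- `N` realizes the ploidy profile `m`: its leaves can be indexed so that the number of
root-to-leaf directed paths to the `i`-th leaf is `m i`. -/
def Realizes (N : PhyloNet) {n : ℕ} (m : Fin n → ℕ) : Prop :=
  ∃ x : Fin n → N.V, Function.Injective x ∧ (∀ v : N.V, N.IsLeaf v ↔ ∃ i, x i = v) ∧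
    ∀ i, N.pathCount N.root (x i) = m i

/-- The hybrid number of a ploidy profile. -/
noncomputable def profileHybridNumber {n : ℕ} (m : Fin n → ℕ) : ℕ :=
  sInf {h : ℕ | ∃ N : PhyloNet, N.IsPhylo ∧ N.Realizes m ∧ N.hybridNumber = h}

end PhyloNet

/-- The hybrid number of a positive integer `m`: the minimum number of hybrid vertices
over all binary phylogenetic networks with a single leaf and exactly `m` root-to-leaf
directed paths. -/
noncomputable def oneLeafHybridNumber (m : ℕ) : ℕ :=
  sInf {h : ℕ | ∃ (N : PhyloNet) (x : N.V), N.IsBinary ∧ N.SingleLeaf x ∧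
    N.pathCount N.root x = m ∧ N.hybridCard = h}


/-! Counting root-to-leaf paths backwards from the leaf, the count is unchanged at a tree vertex
and at most doubles at a hybrid vertex, so a network with `m` paths and `h` hybrid vertices has
`m ≤ 2 ^ h`. Conversely, two one-hybrid operations on a network with leaf `x` realize the binary
expansion of `m`: giving `x` two parallel arcs into a new hybrid above a new leaf doubles the path
count, and adding a new root whose children are the old root and `x` (which becomes a hybrid above
a new leaf) adds one path. Starting from the two-path network with one hybrid, `⌊log₂ m⌋ - 1`
doublings and `s₂(m) - 1` increments reach `m`. Path counts are handled through the first-arc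
recurrence, whose solution is unique because the rank function makes the graph acyclic. -/

open Finset

namespace PathIn

variable {V : Type} {A : V → V → ℕ}

def equivSum (u w : V) :
    PathIn V A u w ≃ PLift (u = w) ⊕ Σ v : V, Fin (A u v) × PathIn V A v w where
  toFun
    | .nil _ => .inl ⟨rfl⟩
    | .cons e p => .inr ⟨_, e, p⟩
  invFun
    | .inl ⟨h⟩ => h ▸ .nil u
    | .inr ⟨_, e, p⟩ => .cons e p
  left_inv p := by cases p <;> rfl
  right_inv x := by rcases x with ⟨⟨rfl⟩⟩ | ⟨v, e, p⟩ <;> rfl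

end PathIn

namespace PhyloNet

section PathCount

variable (N : PhyloNet)

theorem rank_le_sup (v : N.V) : N.rank v ≤ univ.sup N.rank := le_sup (mem_univ v)

instance finite_pathIn (u w : N.V) : Finite (PathIn N.V N.arcs u w) := by
  have (v : N.V) : Finite (Fin (N.arcs u v) × PathIn N.V N.arcs v w) := by
    rcases Nat.eq_zero_or_pos (N.arcs u v) with h | h
    · rw [h]; infer_instance
    · have := N.rank_lt u v h
      have := finite_pathIn v w
      infer_instance
  exact Finite.of_equiv _ (PathIn.equivSum u w).symm
termination_by univ.sup N.rank - N.rank u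
decreasing_by have := N.rank_le_sup v; omega

variable [DecidableEq N.V]

theorem pathCount_eq (u w : N.V) :
    N.pathCount u w = (if u = w then 1 else 0) + ∑ v, N.arcs u v * N.pathCount v w := by
  rw [pathCount, Nat.card_congr (PathIn.equivSum u w), Nat.card_sum, Nat.card_sigma]
  split_ifs with h
  · subst h; simp [pathCount]
  · simp [h, pathCount]

theorem pathCount_eq_of_forall {w : N.V} {f : N.V → ℕ}
    (hf : ∀ u, f u = (if u = w then 1 else 0) + ∑ v, N.arcs u v * f v) (u : N.V) :
    N.pathCount u w = f u := by
  rw [pathCount_eq, hf u]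
  congr 1
  refine sum_congr rfl fun v _ => ?_
  rcases Nat.eq_zero_or_pos (N.arcs u v) with h | h
  · simp [h]
  · have := N.rank_lt u v h
    rw [pathCount_eq_of_forall hf v]
termination_by univ.sup N.rank - N.rank u
decreasing_by have := N.rank_le_sup v; omega

/-- The last-arc recurrence: its right-hand side, as a function of `u`, solves the first-arc
recurrence. -/
theorem pathCount_eq_sum_mul_arcs (u w : N.V) :
    N.pathCount u w = (if u = w then 1 else 0) + ∑ v, N.pathCount u v * N.arcs v w := by
  refine N.pathCount_eq_of_forall
    (f := fun u => (if u = w then 1 else 0) + ∑ v, N.pathCount u v * N.arcs v w) (fun u => ?_) u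
  have (v : N.V) := N.pathCount_eq u v
  simp only [this, add_mul, sum_add_distrib, ite_mul, one_mul, zero_mul, sum_ite_eq, mem_univ,
    if_true, mul_add, mul_ite, mul_one, mul_zero, sum_ite_eq', sum_mul, mul_sum, mul_assoc]
  rw [sum_comm]

theorem pathCount_eq_zero_of_rank_lt {u w : N.V} (h : N.rank w < N.rank u) :
    N.pathCount u w = 0 := by
  rw [pathCount_eq, if_neg (by rintro rfl; omega), zero_add]
  refine sum_eq_zero fun v _ => ?_
  rcases Nat.eq_zero_or_pos (N.arcs u v) with hv | hv
  · rw [hv, zero_mul]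
  · have := N.rank_lt u v hv
    rw [pathCount_eq_zero_of_rank_lt (by omega : N.rank w < N.rank v), mul_zero]
termination_by univ.sup N.rank - N.rank u
decreasing_by have := N.rank_le_sup v; omega

theorem pathCount_self (v : N.V) : N.pathCount v v = 1 := by
  rw [pathCount_eq, if_pos rfl, add_eq_left]
  refine sum_eq_zero fun u _ => ?_
  rcases Nat.eq_zero_or_pos (N.arcs v u) with h | h
  · rw [h, zero_mul]
  · rw [N.pathCount_eq_zero_of_rank_lt (N.rank_lt v u h), mul_zero]

end PathCount

section Binary

variable {N : PhyloNet}

theorem isBinary_and_singleLeaf_iff {x : N.V} :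
    N.IsBinary ∧ N.SingleLeaf x ↔
      (N.indeg N.root = 0 ∧ N.outdeg N.root = 2) ∧ (N.indeg x = 1 ∧ N.outdeg x = 0) ∧
      ∀ v, v ≠ N.root → v ≠ x →
        (N.indeg v = 1 ∧ N.outdeg v = 2) ∨ (N.indeg v = 2 ∧ N.outdeg v = 1) := by
  constructor
  · rintro ⟨⟨hr0, hr2, hv⟩, hx, hleaf⟩
    refine ⟨⟨hr0, hr2⟩, hx, fun v hvr hvx => ?_⟩
    rcases hv v hvr with hl | h | h
    · exact absurd (hleaf v hl) hvx
    · exact .inl h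
    · exact .inr h
  · rintro ⟨⟨hr0, hr2⟩, hx, hv⟩
    refine ⟨⟨hr0, hr2, fun v hvr => ?_⟩, hx, fun v ⟨hv1, hv0⟩ => ?_⟩
    · by_cases hvx : v = x
      · exact .inl (hvx ▸ hx)
      · exact .inr (hv v hvr hvx)
    · by_contra hvx
      have hvr : v ≠ N.root := by rintro rfl; omega
      rcases hv v hvr hvx with h | h <;> omega

theorem hybridCard_eq_card_filter (N : PhyloNet) : N.hybridCard = #{v | 2 ≤ N.indeg v} := by
  rw [hybridCard, Nat.card_eq_fintype_card, Fintype.card_subtype]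

theorem hybridCard_eq_sum (N : PhyloNet) :
    N.hybridCard = ∑ v, if 2 ≤ N.indeg v then 1 else 0 := by
  rw [hybridCard_eq_card_filter, card_filter]

def hybridsBelow (N : PhyloNet) (r : ℕ) : Finset N.V := {h | 2 ≤ N.indeg h ∧ N.rank h < r}

theorem hybridsBelow_mono {r s : ℕ} (hrs : r ≤ s) : N.hybridsBelow r ⊆ N.hybridsBelow s := by
  intro h
  simp only [hybridsBelow, mem_filter, mem_univ, true_and]
  omega

theorem pathCount_root_le_two_pow [DecidableEq N.V] (hN : N.IsBinary) (v : N.V) :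
    N.pathCount N.root v ≤ 2 ^ #(N.hybridsBelow (N.rank v + 1)) := by
  rw [pathCount_eq_sum_mul_arcs]
  by_cases hvr : N.root = v
  · subst hvr
    have (u : N.V) : N.arcs u N.root = 0 := sum_eq_zero_iff.mp hN.1 u (mem_univ u)
    simp [this, Nat.one_le_two_pow]
  have hterm (u : N.V) :
      N.pathCount N.root u * N.arcs u v ≤ 2 ^ #(N.hybridsBelow (N.rank v)) * N.arcs u v := by
    rcases Nat.eq_zero_or_pos (N.arcs u v) with h | h
    · simp [h]
    · have hu := N.rank_lt u v h
      exact Nat.mul_le_mul_right _ ((pathCount_root_le_two_pow hN u).trans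
        (Nat.pow_le_pow_right two_pos (card_le_card (hybridsBelow_mono hu))))
  have hindeg : 2 ^ #(N.hybridsBelow (N.rank v)) * N.indeg v
      ≤ 2 ^ #(N.hybridsBelow (N.rank v + 1)) := by
    have hsub := hybridsBelow_mono (N := N) (Nat.le_succ (N.rank v))
    rcases hN.2.2 v (Ne.symm hvr) with ⟨h1, -⟩ | ⟨h1, -⟩ | ⟨h2, -⟩
    · rw [h1, mul_one]; exact Nat.pow_le_pow_right two_pos (card_le_card hsub)
    · rw [h1, mul_one]; exact Nat.pow_le_pow_right two_pos (card_le_card hsub)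
    · have hv : v ∈ N.hybridsBelow (N.rank v + 1) := by simp [hybridsBelow, h2]
      have hv' : v ∉ N.hybridsBelow (N.rank v) := by simp [hybridsBelow]
      rw [h2, ← pow_succ]
      exact Nat.pow_le_pow_right two_pos (card_lt_card ⟨hsub, fun h => hv' (h hv)⟩)
  calc (if N.root = v then 1 else 0) + ∑ u, N.pathCount N.root u * N.arcs u v
      ≤ ∑ u, 2 ^ #(N.hybridsBelow (N.rank v)) * N.arcs u v := by
        rw [if_neg hvr, zero_add]; exact sum_le_sum fun u _ => hterm u
    _ = 2 ^ #(N.hybridsBelow (N.rank v)) * N.indeg v := by rw [indeg, mul_sum]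
    _ ≤ _ := hindeg
termination_by N.rank v

theorem pathCount_root_le_two_pow_hybridCard [DecidableEq N.V] (hN : N.IsBinary) (v : N.V) :
    N.pathCount N.root v ≤ 2 ^ N.hybridCard := by
  refine (pathCount_root_le_two_pow hN v).trans (Nat.pow_le_pow_right two_pos ?_)
  rw [hybridCard_eq_card_filter]
  exact card_le_card fun h hh => by
    simp only [hybridsBelow, mem_filter] at hh ⊢
    exact ⟨hh.1, hh.2.1⟩

theorem pathCount_pos [DecidableEq N.V] {x : N.V} (hout : ∀ v, v ≠ x → 0 < N.outdeg v)
    (v : N.V) : 0 < N.pathCount v x := by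
  rw [pathCount_eq]
  by_cases hvx : v = x
  · simp [hvx]
  obtain ⟨w, -, hw⟩ := sum_pos_iff.mp (hout v hvx)
  have := N.rank_lt v w hw
  have := pathCount_pos hout w
  calc 0 < N.arcs v w * N.pathCount w x := by positivity
    _ ≤ ∑ u, N.arcs v u * N.pathCount u x :=
        single_le_sum (f := fun u => N.arcs v u * N.pathCount u x)
          (fun _ _ => Nat.zero_le _) (mem_univ w)
    _ ≤ _ := le_add_self
termination_by univ.sup N.rank - N.rank v
decreasing_by have := N.rank_le_sup w; omega

theorem two_le_pathCount_root {x : N.V} (hN : N.IsBinary ∧ N.SingleLeaf x) :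
    2 ≤ N.pathCount N.root x := by
  classical
  obtain ⟨⟨hr0, hr2⟩, -, hv⟩ := isBinary_and_singleLeaf_iff.mp hN
  have hout (v : N.V) (hvx : v ≠ x) : 0 < N.outdeg v := by
    by_cases hvr : v = N.root
    · subst hvr; omega
    · rcases hv v hvr hvx with h | h <;> omega
  calc 2 = ∑ v, N.arcs N.root v * 1 := by simp [← hr2, outdeg]
    _ ≤ ∑ v, N.arcs N.root v * N.pathCount v x :=
        sum_le_sum fun v _ => Nat.mul_le_mul_left _ (pathCount_pos hout v)
    _ ≤ _ := by rw [pathCount_eq]; exact le_add_self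

end Binary

section DoublePaths

variable (N : PhyloNet) (x : N.V)

open Classical in
noncomputable abbrev doublePaths : PhyloNet where
  V := N.V ⊕ Fin 2
  fin := inferInstance
  root := .inl N.root
  arcs
    | .inl a, .inl b => N.arcs a b
    | .inl a, .inr 0 => if a = x then 2 else 0
    | .inr 0, .inr 1 => 1
    | _, _ => 0
  rank
    | .inl a => N.rank a
    | .inr i => univ.sup N.rank + 1 + i
  rank_lt := by
    have := N.rank_le_sup
    rintro (a | i) (b | j) h
    · exact N.rank_lt a b h
    · fin_cases j <;> simp at h ⊢
      have := this a
      omega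
    · fin_cases i <;> simp at h
    · fin_cases i <;> fin_cases j <;> simp at h ⊢

variable {N x}

theorem doublePaths_indeg_inl (v : N.V) : (N.doublePaths x).indeg (.inl v) = N.indeg v := by
  simp [indeg]

theorem doublePaths_outdeg_inl_of_ne {v : N.V} (hv : v ≠ x) :
    (N.doublePaths x).outdeg (.inl v) = N.outdeg v := by
  simp [outdeg, hv]

theorem doublePaths_outdeg_inl_self : (N.doublePaths x).outdeg (.inl x) = N.outdeg x + 2 := by
  simp [outdeg]

theorem doublePaths_degrees_inr :
    (N.doublePaths x).indeg (.inr 0) = 2 ∧ (N.doublePaths x).outdeg (.inr 0) = 1 ∧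
      (N.doublePaths x).indeg (.inr 1) = 1 ∧ (N.doublePaths x).outdeg (.inr 1) = 0 := by
  classical
  simp [indeg, outdeg]

theorem doublePaths_isBinary_and_singleLeaf (hN : N.IsBinary ∧ N.SingleLeaf x) :
    (N.doublePaths x).IsBinary ∧ (N.doublePaths x).SingleLeaf (.inr 1) := by
  obtain ⟨⟨hr0, hr2⟩, ⟨hx1, hx0⟩, hv⟩ := isBinary_and_singleLeaf_iff.mp hN
  obtain ⟨h0in, h0out, h1in, h1out⟩ := doublePaths_degrees_inr (N := N) (x := x)
  have hrx : N.root ≠ x := by rintro rfl; omega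
  refine isBinary_and_singleLeaf_iff.mpr ⟨?_, ⟨h1in, h1out⟩, ?_⟩
  · exact ⟨(doublePaths_indeg_inl _).trans hr0, (doublePaths_outdeg_inl_of_ne hrx).trans hr2⟩
  · rintro (v | i) hvr hvx
    · have hvr : v ≠ N.root := fun h => hvr (congrArg Sum.inl h)
      rw [doublePaths_indeg_inl]
      by_cases hvx : v = x
      · subst hvx
        simp [doublePaths_outdeg_inl_self, hx1, hx0]
      · rw [doublePaths_outdeg_inl_of_ne hvx]
        exact hv v hvr hvx
    · fin_cases i
      · exact .inr ⟨h0in, h0out⟩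
      · exact absurd rfl hvx

theorem doublePaths_hybridCard : (N.doublePaths x).hybridCard = N.hybridCard + 1 := by
  obtain ⟨h0in, -, h1in, -⟩ := doublePaths_degrees_inr (N := N) (x := x)
  rw [hybridCard_eq_sum, hybridCard_eq_sum, Fintype.sum_sum_type, Fin.sum_univ_two]
  simp [doublePaths_indeg_inl, h0in, h1in]

theorem pathCount_doublePaths :
    (N.doublePaths x).pathCount (N.doublePaths x).root (.inr 1) = 2 * N.pathCount N.root x := by
  classical
  refine (N.doublePaths x).pathCount_eq_of_forall
    (f := Sum.elim (fun u => 2 * N.pathCount u x) fun _ => 1) (fun u => ?_) _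
  rw [Fintype.sum_sum_type, Fin.sum_univ_two]
  rcases u with u | i
  · simp only [Sum.elim_inl]
    rw [N.pathCount_eq u x]
    simp [mul_add, mul_sum, mul_left_comm, add_comm]
  · fin_cases i <;> simp [doublePaths]

end DoublePaths

section SuccPaths

variable (N : PhyloNet) (x : N.V)

open Classical in
noncomputable abbrev succPaths : PhyloNet where
  V := N.V ⊕ Fin 2
  fin := inferInstance
  root := .inr 0
  arcs
    | .inl a, .inl b => N.arcs a b
    | .inl a, .inr 1 => if a = x then 1 else 0
    | .inr 0, .inl b => (if b = N.root then 1 else 0) + if b = x then 1 else 0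
    | _, _ => 0
  rank
    | .inl a => N.rank a + 1
    | .inr i => i * (univ.sup N.rank + 2)
  rank_lt := by
    have := N.rank_le_sup
    rintro (a | i) (b | j) h
    · exact Nat.add_lt_add_right (N.rank_lt a b h) 1
    · fin_cases j <;> simp at h ⊢
      have := this a
      omega
    · fin_cases i <;> simp at h ⊢
    · fin_cases i <;> fin_cases j <;> simp at h ⊢

variable {N x}

theorem succPaths_indeg_inl_of_ne {v : N.V} (hvr : v ≠ N.root) (hvx : v ≠ x) :
    (N.succPaths x).indeg (.inl v) = N.indeg v := by
  simp [indeg, hvr, hvx]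

theorem succPaths_indeg_inl_root (hrx : N.root ≠ x) :
    (N.succPaths x).indeg (.inl N.root) = N.indeg N.root + 1 := by
  simp [indeg, hrx]

theorem succPaths_indeg_inl_self (hrx : N.root ≠ x) :
    (N.succPaths x).indeg (.inl x) = N.indeg x + 1 := by
  simp [indeg, hrx.symm]

theorem succPaths_outdeg_inl_of_ne {v : N.V} (hvx : v ≠ x) :
    (N.succPaths x).outdeg (.inl v) = N.outdeg v := by
  simp [outdeg, hvx]

theorem succPaths_outdeg_inl_self : (N.succPaths x).outdeg (.inl x) = N.outdeg x + 1 := by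
  simp [outdeg]

theorem succPaths_degrees_inr :
    (N.succPaths x).indeg (.inr 0) = 0 ∧ (N.succPaths x).outdeg (.inr 0) = 2 ∧
      (N.succPaths x).indeg (.inr 1) = 1 ∧ (N.succPaths x).outdeg (.inr 1) = 0 := by
  classical
  simp [indeg, outdeg, sum_add_distrib]

theorem succPaths_isBinary_and_singleLeaf (hN : N.IsBinary ∧ N.SingleLeaf x) :
    (N.succPaths x).IsBinary ∧ (N.succPaths x).SingleLeaf (.inr 1) := by
  obtain ⟨⟨hr0, hr2⟩, ⟨hx1, hx0⟩, hv⟩ := isBinary_and_singleLeaf_iff.mp hN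
  obtain ⟨h0in, h0out, h1in, h1out⟩ := succPaths_degrees_inr (N := N) (x := x)
  have hrx : N.root ≠ x := by rintro rfl; omega
  refine isBinary_and_singleLeaf_iff.mpr ⟨⟨h0in, h0out⟩, ⟨h1in, h1out⟩, ?_⟩
  rintro (v | i) hvr hvx
  · by_cases hvr : v = N.root
    · subst hvr
      rw [succPaths_indeg_inl_root hrx, succPaths_outdeg_inl_of_ne hrx]
      omega
    by_cases hvx : v = x
    · subst hvx
      rw [succPaths_indeg_inl_self hrx, succPaths_outdeg_inl_self]
      omega
    rw [succPaths_indeg_inl_of_ne hvr hvx, succPaths_outdeg_inl_of_ne hvx]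
    exact hv v hvr hvx
  · fin_cases i
    · exact absurd rfl hvr
    · exact absurd rfl hvx

theorem succPaths_hybridCard (hN : N.IsBinary ∧ N.SingleLeaf x) :
    (N.succPaths x).hybridCard = N.hybridCard + 1 := by
  classical
  obtain ⟨⟨hr0, -⟩, ⟨hx1, -⟩, -⟩ := isBinary_and_singleLeaf_iff.mp hN
  obtain ⟨h0in, -, h1in, -⟩ := succPaths_degrees_inr (N := N) (x := x)
  have hrx : N.root ≠ x := by rintro rfl; omega
  have hinl (v : N.V) : (if 2 ≤ (N.succPaths x).indeg (.inl v) then 1 else 0) =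
      (if 2 ≤ N.indeg v then 1 else 0) + if v = x then 1 else 0 := by
    by_cases hvr : v = N.root
    · subst hvr; simp [succPaths_indeg_inl_root hrx, hr0, hrx]
    by_cases hvx : v = x
    · subst hvx; simp [succPaths_indeg_inl_self hrx, hx1]
    · simp [succPaths_indeg_inl_of_ne hvr hvx, hvx]
  rw [hybridCard_eq_sum, hybridCard_eq_sum, Fintype.sum_sum_type, Fin.sum_univ_two]
  simp only [hinl, sum_add_distrib, sum_ite_eq', mem_univ, if_true, h0in, h1in]
  simp

theorem pathCount_succPaths :
    (N.succPaths x).pathCount (N.succPaths x).root (.inr 1) = N.pathCount N.root x + 1 := by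
  classical
  refine (N.succPaths x).pathCount_eq_of_forall
    (f := Sum.elim (N.pathCount · x) ![N.pathCount N.root x + 1, 1]) (fun u => ?_) _
  rw [Fintype.sum_sum_type, Fin.sum_univ_two]
  rcases u with u | i
  · simp only [Sum.elim_inl]
    rw [N.pathCount_eq u x]
    simp [add_comm]
  · fin_cases i <;> simp [add_mul, sum_add_distrib, N.pathCount_self]

end SuccPaths

abbrev twoPathNet : PhyloNet where
  V := Fin 3
  fin := inferInstance
  root := 0
  arcs := ![![0, 2, 0], ![0, 0, 1], ![0, 0, 0]]
  rank := Fin.val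
  rank_lt := by decide

theorem twoPathNet_isBinary_and_singleLeaf : twoPathNet.IsBinary ∧ twoPathNet.SingleLeaf 2 :=
  isBinary_and_singleLeaf_iff.mpr (by decide)

theorem pathCount_twoPathNet : twoPathNet.pathCount twoPathNet.root 2 = 2 :=
  twoPathNet.pathCount_eq_of_forall (f := ![2, 1, 1]) (by decide) 0

theorem twoPathNet_hybridCard : twoPathNet.hybridCard = 1 := by
  rw [hybridCard_eq_card_filter]
  decide

end PhyloNet

theorem Nat.log_two_add_digits_sum_eq {m : ℕ} (hm : 2 ≤ m) :
    Nat.log 2 m + (Nat.digits 2 m).sum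
      = Nat.log 2 (m / 2) + (Nat.digits 2 (m / 2)).sum + 1 + m % 2 := by
  rw [Nat.digits_def' one_lt_two (by omega), List.sum_cons, Nat.log_div_base]
  have := Nat.log_pos one_lt_two hm
  omega

theorem Nat.digits_sum_two_pow (k : ℕ) : (Nat.digits 2 (2 ^ k)).sum = 1 := by
  simpa using congrArg List.sum (Nat.digits_base_pow_mul (k := k) one_lt_two one_pos)

open PhyloNet in
theorem exists_network_log_add_digits_sum (m : ℕ) (hm : 2 ≤ m) :
    ∃ (N : PhyloNet) (x : N.V), (N.IsBinary ∧ N.SingleLeaf x) ∧ N.pathCount N.root x = m ∧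
      N.hybridCard + 1 = Nat.log 2 m + (Nat.digits 2 m).sum := by
  induction m using Nat.strong_induction_on with
  | _ m ih =>
  rcases (show m = 2 ∨ 4 ≤ m ∧ m % 2 = 0 ∨ 3 ≤ m ∧ m % 2 = 1 by omega)
    with rfl | ⟨hm4, heven⟩ | ⟨hm3, hodd⟩
  · refine ⟨twoPathNet, 2, twoPathNet_isBinary_and_singleLeaf, pathCount_twoPathNet, ?_⟩
    rw [twoPathNet_hybridCard, Nat.log_two_add_digits_sum_eq le_rfl]
    simp
  · obtain ⟨N, x, hN, hpc, hh⟩ := ih (m / 2) (by omega) (by omega)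
    refine ⟨N.doublePaths x, .inr 1, doublePaths_isBinary_and_singleLeaf hN, ?_, ?_⟩
    · rw [pathCount_doublePaths, hpc]
      omega
    · rw [doublePaths_hybridCard, Nat.log_two_add_digits_sum_eq hm, ← hh]
      omega
  · obtain ⟨N, x, hN, hpc, hh⟩ := ih (m - 1) (by omega) (by omega)
    refine ⟨N.succPaths x, .inr 1, succPaths_isBinary_and_singleLeaf hN, ?_, ?_⟩
    · rw [pathCount_succPaths, hpc]
      omega
    · have hpred := Nat.log_two_add_digits_sum_eq (m := m - 1) (by omega)
      rw [show (m - 1) / 2 = m / 2 by omega] at hpred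
      rw [succPaths_hybridCard hN, Nat.log_two_add_digits_sum_eq hm, hh, hpred]
      omega

theorem oneLeafHybridNumber_le_hybridCard {N : PhyloNet} {x : N.V}
    (hN : N.IsBinary ∧ N.SingleLeaf x) :
    oneLeafHybridNumber (N.pathCount N.root x) ≤ N.hybridCard :=
  Nat.sInf_le ⟨N, x, hN.1, hN.2, rfl, rfl⟩

theorem le_two_pow_oneLeafHybridNumber {N : PhyloNet} {x : N.V}
    (hN : N.IsBinary ∧ N.SingleLeaf x) :
    N.pathCount N.root x ≤ 2 ^ oneLeafHybridNumber (N.pathCount N.root x) := by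
  classical
  obtain ⟨M, y, hM, -, hpc, hh⟩ : oneLeafHybridNumber (N.pathCount N.root x) ∈ _ :=
    Nat.sInf_mem ⟨_, N, x, hN.1, hN.2, rfl, rfl⟩
  rw [← hh, ← hpc]
  exact M.pathCount_root_le_two_pow_hybridCard hM y

/-- No network has a single root-to-leaf path, so this is `sInf ∅`. -/
theorem oneLeafHybridNumber_one : oneLeafHybridNumber 1 = 0 := by
  refine Nat.sInf_eq_zero.mpr (.inr (Set.eq_empty_of_forall_notMem ?_))
  rintro h ⟨N, x, hB, hx, hpc, -⟩
  have := PhyloNet.two_le_pathCount_root ⟨hB, hx⟩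
  omega

/-- `h(m) ≤ ⌊log₂ m⌋ + s₂(m) − 1` for every positive `m`, and
`h(2^k) = k` for every `k ≥ 1`. -/
theorem stmt5 :
    (∀ m : ℕ, 0 < m → oneLeafHybridNumber m ≤ Nat.log 2 m + (Nat.digits 2 m).sum - 1) ∧
    (∀ k : ℕ, 1 ≤ k → oneLeafHybridNumber (2 ^ k) = k) := by
  refine ⟨fun m hm => ?_, fun k hk => ?_⟩
  · rcases (show m = 1 ∨ 2 ≤ m by omega) with rfl | hm2
    · simp [oneLeafHybridNumber_one]
    obtain ⟨N, x, hN, rfl, hh⟩ := exists_network_log_add_digits_sum m hm2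
    exact (oneLeafHybridNumber_le_hybridCard hN).trans (by omega)
  · obtain ⟨N, x, hN, hpc, hh⟩ :=
      exists_network_log_add_digits_sum (2 ^ k) (Nat.le_self_pow (by omega) 2)
    rw [Nat.log_pow one_lt_two, Nat.digits_sum_two_pow] at hh
    have hub := oneLeafHybridNumber_le_hybridCard hN
    have hlb := le_two_pow_oneLeafHybridNumber hN
    rw [hpc] at hub hlb
    exact le_antisymm (by omega) ((Nat.pow_le_pow_iff_right one_lt_two).mp hlb)
end

section
/- Any binary phylogenetic network with exactly one leaf x and exactly h hybrid vertices has number of root-to-leaf directed paths at least h + 1 and at most 2^h. -/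
/-! ### Auxiliary machinery -/

section Aux
open Classical

namespace PathIn

variable {V : Type} {arcs : V → V → ℕ}

/-- Concatenation of paths. -/
def concat : {u v w : V} → PathIn V arcs u v → PathIn V arcs v w → PathIn V arcs u w
  | _, _, _, .nil _, q => q
  | _, _, _, .cons e p, q => .cons e (concat p q)

/-- The list of (head vertex, arc index) pairs along a path. -/
def toList : {u v : V} → PathIn V arcs u v → List (V × ℕ)
  | _, _, .nil _ => []
  | _, _, .cons (v := b) e p => (b, e.val) :: toList p

lemma toList_injective : ∀ {u v : V} (p q : PathIn V arcs u v),
    p.toList = q.toList → p = q := by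
  intro u v p
  induction p with
  | nil w =>
    intro q h
    cases q with
    | nil => rfl
    | cons e p' => simp [toList] at h
  | cons e p' ih =>
    intro q h
    cases q with
    | nil => simp [toList] at h
    | cons e' q' =>
      rename_i u1 v1 w1 v2
      simp only [toList, List.cons.injEq, Prod.mk.injEq] at h
      obtain ⟨⟨h1, h2⟩, h3⟩ := h
      subst h1
      have he : e = e' := Fin.ext h2
      subst he
      rw [ih q' h3]

/-- Encode a path as either nothing (nil) or its first arc plus the rest. -/
def encode : {u v : V} → PathIn V arcs u v → Option ((w : V) × (Fin (arcs u w) × PathIn V arcs w v))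
  | _, _, .nil _ => none
  | _, _, .cons (v := b) e q => some ⟨b, e, q⟩

lemma encode_injective : ∀ {u v : V} (p q : PathIn V arcs u v),
    p.encode = q.encode → p = q := by
  intro u v p q hpq
  cases p with
  | nil =>
    cases q with
    | nil => rfl
    | cons e q' => simp [encode] at hpq
  | cons e p' =>
    cases q with
    | nil => simp [encode] at hpq
    | cons e' q' =>
      simp only [encode] at hpq
      injection hpq with hpq'
      injection hpq' with h1 h2
      subst h1
      rw [heq_iff_eq, Prod.mk.injEq] at h2
      rw [h2.1, h2.2]

end PathIn
end Aux

section Aux2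
open Classical

namespace PhyloNet
variable (N : PhyloNet)

noncomputable def maxR : ℕ := Finset.univ.sup N.rank

lemma rank_le_maxR (v : N.V) : N.rank v ≤ N.maxR := Finset.le_sup (Finset.mem_univ v)

lemma finite_path_aux : ∀ (k : ℕ) (u : N.V), N.maxR + 1 - N.rank u ≤ k →
    ∀ v : N.V, Finite (PathIn N.V N.arcs u v) := by
  intro k
  induction k with
  | zero =>
    intro u hu v
    have := N.rank_le_maxR u
    omega
  | succ k ih =>
    intro u hu v
    have hfib : ∀ w : N.V, Finite (Fin (N.arcs u w) × PathIn N.V N.arcs w v) := by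
      intro w
      by_cases h : 0 < N.arcs u w
      · have h1 := N.rank_lt u w h
        have h2 := N.rank_le_maxR w
        haveI := ih w (by omega) v
        infer_instance
      · have : N.arcs u w = 0 := by omega
        haveI : IsEmpty (Fin (N.arcs u w)) := by rw [this]; infer_instance
        infer_instance
    haveI := hfib
    haveI : Finite ((w : N.V) × (Fin (N.arcs u w) × PathIn N.V N.arcs w v)) := by
      infer_instance
    haveI := Fintype.ofFinite ((w : N.V) × (Fin (N.arcs u w) × PathIn N.V N.arcs w v))
    haveI : Finite (Option ((w : N.V) × (Fin (N.arcs u w) × PathIn N.V N.arcs w v))) :=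
      inferInstance
    exact Finite.of_injective PathIn.encode (fun p q h => PathIn.encode_injective p q h)

instance finite_path (u v : N.V) : Finite (PathIn N.V N.arcs u v) :=
  N.finite_path_aux (N.maxR + 1) u (by omega) v

end PhyloNet
end Aux2

section Aux3
open Classical

namespace PhyloNet
variable (N : PhyloNet)

lemma arcs_le_indeg (t v : N.V) : N.arcs t v ≤ N.indeg v :=
  Finset.single_le_sum (f := fun u => N.arcs u v) (fun _ _ => Nat.zero_le _) (Finset.mem_univ t)

lemma pair_le_indeg {t t' : N.V} (v : N.V) (h : t ≠ t') :
    N.arcs t v + N.arcs t' v ≤ N.indeg v := by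
  have : ∑ u ∈ ({t, t'} : Finset N.V), N.arcs u v ≤ N.indeg v :=
    Finset.sum_le_sum_of_subset (Finset.subset_univ _)
  rwa [Finset.sum_pair h] at this

lemma triple_le_indeg {t t' t'' : N.V} (v : N.V) (h1 : t ≠ t') (h2 : t ≠ t'') (h3 : t' ≠ t'') :
    N.arcs t v + N.arcs t' v + N.arcs t'' v ≤ N.indeg v := by
  have hsub : ∑ u ∈ ({t, t', t''} : Finset N.V), N.arcs u v ≤ N.indeg v :=
    Finset.sum_le_sum_of_subset (Finset.subset_univ _)
  rw [Finset.sum_insert (by simp [h1, h2]), Finset.sum_pair h3] at hsub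
  omega

/-- The canonical parent of a vertex (junk value `root` for in-degree-zero vertices). -/
noncomputable def par (v : N.V) : N.V :=
  if h : ∃ u, 0 < N.arcs u v then h.choose else N.root

lemma par_spec {v : N.V} (h : 0 < N.indeg v) : 0 < N.arcs (N.par v) v := by
  have h' : ∃ u, 0 < N.arcs u v := by
    by_contra hc
    push_neg at hc
    have : N.indeg v = 0 := Finset.sum_eq_zero (fun u _ => by have := hc u; omega)
    omega
  rw [par, dif_pos h']
  exact h'.choose_spec

/-- In-degree-one vertices have a unique entering arc, the canonical one. -/
lemma enter_eq_of_indeg_one {v t : N.V} {i : ℕ} (hv : N.indeg v = 1) (hi : i < N.arcs t v) :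
    t = N.par v ∧ i = 0 := by
  have hp : 0 < N.arcs (N.par v) v := N.par_spec (by omega)
  have ht : t = N.par v := by
    by_contra hne
    have := N.pair_le_indeg v hne
    omega
  subst ht
  have := N.arcs_le_indeg (N.par v) v
  exact ⟨rfl, by omega⟩

/-- In-degree-two vertices have a unique non-canonical entering arc. -/
lemma noncanon_unique {v t t' : N.V} {i i' : ℕ} (hv : N.indeg v = 2)
    (hi : i < N.arcs t v) (hi' : i' < N.arcs t' v)
    (hn : ¬(t = N.par v ∧ i = 0)) (hn' : ¬(t' = N.par v ∧ i' = 0)) :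
    t = t' ∧ i = i' := by
  have hp : 0 < N.arcs (N.par v) v := N.par_spec (by omega)
  by_cases htt : t = t'
  · subst htt
    refine ⟨rfl, ?_⟩
    by_cases htp : t = N.par v
    · have h2 : N.arcs t v ≤ 2 := le_trans (N.arcs_le_indeg t v) (by omega)
      simp only [htp, true_and] at hn hn'
      omega
    · have := N.pair_le_indeg v htp
      omega
  · exfalso
    by_cases htp : t = N.par v
    · -- t = par v, t' ≠ par v; noncanonicality of (t,i) forces i ≠ 0 hence arcs t v ≥ 2
      simp only [htp, true_and] at hn
      have h2 : 2 ≤ N.arcs t v := by omega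
      have := N.pair_le_indeg v htt
      omega
    · by_cases htp' : t' = N.par v
      · simp only [htp', true_and] at hn'
        have h2 : 2 ≤ N.arcs t' v := by omega
        have := N.pair_le_indeg v htt
        have hpt : N.arcs (N.par v) v ≤ N.arcs t' v := le_of_eq (by rw [htp'])
        omega
      · have := N.triple_le_indeg v htt htp htp'
        have h1 : N.par v ≠ t := fun h => htp h.symm
        have h2 : N.par v ≠ t' := fun h => htp' h.symm
        have := N.triple_le_indeg v h1 h2 htt
        omega

/-- In-degree-two vertices have a non-canonical entering arc. -/
lemma noncanon_exists {v : N.V} (hv : N.indeg v = 2) :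
    ∃ t i, i < N.arcs t v ∧ ¬(t = N.par v ∧ i = 0) := by
  have hp : 0 < N.arcs (N.par v) v := N.par_spec (by omega)
  by_cases h2 : 2 ≤ N.arcs (N.par v) v
  · exact ⟨N.par v, 1, by omega, by simp⟩
  · have h1 : N.arcs (N.par v) v = 1 := by omega
    have : ∃ t, t ≠ N.par v ∧ 0 < N.arcs t v := by
      by_contra hc
      push_neg at hc
      have : N.indeg v = N.arcs (N.par v) v := by
        apply Finset.sum_eq_single
        · intro b _ hb
          have := hc b hb
          omega
        · intro h; exact absurd (Finset.mem_univ _) h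
      omega
    obtain ⟨t, htp, ht⟩ := this
    exact ⟨t, 0, ht, by simp [htp]⟩

end PhyloNet
end Aux3

section Aux4
open Classical

namespace PhyloNet
variable (N : PhyloNet)

/-- `ValidFrom u l v`: the list `l` of (head, arc-index) pairs is a valid path from `u` to `v`. -/
def ValidFrom : N.V → List (N.V × ℕ) → N.V → Prop
  | u, [], v => u = v
  | u, (w, i) :: l, v => i < N.arcs u w ∧ ValidFrom w l v

/-- The canonicality bits of a path list, as a function on vertices. -/
noncomputable def bitsAux : N.V → List (N.V × ℕ) → N.V → Bool
  | _, [], _ => false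
  | u, (w, i) :: l, z => if z = w then (if u = N.par w ∧ i = 0 then false else true)
      else bitsAux w l z

lemma valid_toList : ∀ {u v : N.V} (p : PathIn N.V N.arcs u v), N.ValidFrom u p.toList v := by
  intro u v p
  induction p with
  | nil w => exact rfl
  | cons e p' ih => exact ⟨e.isLt, ih⟩

lemma rank_le_of_valid : ∀ (l : List (N.V × ℕ)) {u v : N.V}, N.ValidFrom u l v →
    N.rank u ≤ N.rank v ∧ ∀ p ∈ l, N.rank p.1 ≤ N.rank v := by
  intro l
  induction l with
  | nil =>
    intro u v h
    cases h
    exact ⟨le_rfl, by simp⟩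
  | cons a l ih =>
    intro u v h
    obtain ⟨w, i⟩ := a
    obtain ⟨h1, h2⟩ := h
    obtain ⟨ih1, ih2⟩ := ih h2
    refine ⟨le_of_lt (lt_of_lt_of_le (N.rank_lt u w (by omega)) ih1), ?_⟩
    intro p hp
    rcases List.mem_cons.mp hp with hp | hp
    · rw [hp]; exact ih1
    · exact ih2 p hp

lemma bitsAux_not_mem : ∀ (l : List (N.V × ℕ)) (u z : N.V), z ∉ l.map Prod.fst →
    N.bitsAux u l z = false := by
  intro l
  induction l with
  | nil => intro u z _; rfl
  | cons a l ih =>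
    intro u z hz
    obtain ⟨w, i⟩ := a
    simp only [List.map_cons, List.mem_cons, not_or] at hz
    rw [bitsAux, if_neg hz.1]
    exact ih w z hz.2

lemma bitsAux_high_rank {l : List (N.V × ℕ)} {u t z : N.V} (hv : N.ValidFrom u l t)
    (hz : N.rank t < N.rank z) : N.bitsAux u l z = false := by
  apply N.bitsAux_not_mem
  intro hmem
  obtain ⟨p, hp, hfst⟩ := List.mem_map.mp hmem
  have := (N.rank_le_of_valid l hv).2 p hp
  rw [hfst] at this
  omega

lemma valid_concat : ∀ (l : List (N.V × ℕ)) {u v w : N.V} {i : ℕ},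
    N.ValidFrom u (l ++ [(w, i)]) v → v = w ∧ ∃ t, N.ValidFrom u l t ∧ i < N.arcs t w := by
  intro l
  induction l with
  | nil =>
    intro u v w i h
    obtain ⟨h1, h2⟩ := h
    cases h2
    exact ⟨rfl, u, rfl, h1⟩
  | cons a l ih =>
    intro u v w i h
    obtain ⟨b, j⟩ := a
    obtain ⟨h1, h2⟩ := h
    obtain ⟨hvw, t, ht1, ht2⟩ := ih h2
    exact ⟨hvw, t, ⟨h1, ht1⟩, ht2⟩

lemma bitsAux_concat : ∀ (l : List (N.V × ℕ)) {u t w : N.V} {i : ℕ} (z : N.V),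
    N.ValidFrom u l t → N.rank t < N.rank w →
    N.bitsAux u (l ++ [(w, i)]) z =
      if z = w then (if t = N.par w ∧ i = 0 then false else true) else N.bitsAux u l z := by
  intro l
  induction l with
  | nil =>
    intro u t w i z hv _
    cases hv
    rfl
  | cons a l ih =>
    intro u t w i z hv hr
    obtain ⟨b, j⟩ := a
    obtain ⟨h1, h2⟩ := hv
    have hbw : b ≠ w := by
      have h3 := (N.rank_le_of_valid l h2).1
      intro h; rw [h] at h3; omega
    by_cases hzb : z = b
    · subst hzb
      simp only [List.cons_append, bitsAux, if_pos rfl, if_neg hbw, if_true]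
    · simp only [List.cons_append, bitsAux, if_neg hzb]
      exact ih z h2 hr

end PhyloNet
end Aux4

section Aux5
open Classical

namespace PhyloNet
variable (N : PhyloNet)

lemma valid_root_nil (hbin : N.IsBinary) {l : List (N.V × ℕ)}
    (h : N.ValidFrom N.root l N.root) : l = [] := by
  rcases List.eq_nil_or_concat l with hl | ⟨L, ⟨w, i⟩, hl⟩
  · exact hl
  · exfalso
    subst hl
    rw [List.concat_eq_append] at h
    obtain ⟨hvw, t, _, ht⟩ := N.valid_concat L h
    have h1 : 0 < N.indeg w := lt_of_lt_of_le (by omega) (N.arcs_le_indeg t w)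
    rw [← hvw] at h1
    rw [hbin.1] at h1
    omega

lemma list_inj (hbin : N.IsBinary) : ∀ (n : ℕ) (l₁ l₂ : List (N.V × ℕ)) (v : N.V),
    l₁.length ≤ n → N.ValidFrom N.root l₁ v → N.ValidFrom N.root l₂ v →
    (∀ w : N.V, 2 ≤ N.indeg w → N.bitsAux N.root l₁ w = N.bitsAux N.root l₂ w) →
    l₁ = l₂ := by
  intro n
  induction n with
  | zero =>
    intro l₁ l₂ v hlen hv1 hv2 _
    have h1 : l₁ = [] := List.eq_nil_of_length_eq_zero (by omega)
    subst h1
    cases hv1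
    exact (N.valid_root_nil hbin hv2).symm
  | succ n ih =>
    intro l₁ l₂ v hlen hv1 hv2 hbits
    rcases List.eq_nil_or_concat l₁ with hl1 | ⟨L₁, ⟨w₁, i₁⟩, hl1⟩
    · subst hl1
      cases hv1
      exact (N.valid_root_nil hbin hv2).symm
    · subst hl1
      rw [List.concat_eq_append] at hv1 hlen hbits ⊢
      obtain ⟨hvw1, t₁, hL₁, ht₁⟩ := N.valid_concat L₁ hv1
      subst hvw1
      have hvpos : 0 < N.indeg v := lt_of_lt_of_le (by omega) (N.arcs_le_indeg t₁ v)
      have hvroot : v ≠ N.root := by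
        intro h; rw [h, hbin.1] at hvpos; omega
      rcases List.eq_nil_or_concat l₂ with hl2 | ⟨L₂, ⟨w₂, i₂⟩, hl2⟩
      · exfalso
        subst hl2
        cases hv2
        rw [hbin.1] at hvpos
        omega
      · subst hl2
        rw [List.concat_eq_append] at hv2 hbits ⊢
        obtain ⟨hvw2, t₂, hL₂, ht₂⟩ := N.valid_concat L₂ hv2
        subst hvw2
        have hr₁ : N.rank t₁ < N.rank v := N.rank_lt t₁ v (by omega)
        have hr₂ : N.rank t₂ < N.rank v := N.rank_lt t₂ v (by omega)
        -- the two entering arcs agree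
        have key : t₁ = t₂ ∧ i₁ = i₂ := by
          rcases hbin.2.2 v hvroot with ⟨h1, _⟩ | ⟨h1, _⟩ | ⟨h2, _⟩
          · obtain ⟨e1, e2⟩ := N.enter_eq_of_indeg_one h1 ht₁
            obtain ⟨e3, e4⟩ := N.enter_eq_of_indeg_one h1 ht₂
            exact ⟨e1.trans e3.symm, e2.trans e4.symm⟩
          · obtain ⟨e1, e2⟩ := N.enter_eq_of_indeg_one h1 ht₁
            obtain ⟨e3, e4⟩ := N.enter_eq_of_indeg_one h1 ht₂
            exact ⟨e1.trans e3.symm, e2.trans e4.symm⟩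
          · have hb := hbits v (by omega)
            rw [N.bitsAux_concat L₁ v hL₁ hr₁, N.bitsAux_concat L₂ v hL₂ hr₂,
              if_pos rfl, if_pos rfl] at hb
            by_cases c₁ : t₁ = N.par v ∧ i₁ = 0
            · by_cases c₂ : t₂ = N.par v ∧ i₂ = 0
              · exact ⟨c₁.1.trans c₂.1.symm, c₁.2.trans c₂.2.symm⟩
              · rw [if_pos c₁, if_neg c₂] at hb; exact absurd hb (by simp)
            · by_cases c₂ : t₂ = N.par v ∧ i₂ = 0
              · rw [if_neg c₁, if_pos c₂] at hb; exact absurd hb (by simp)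
              · exact N.noncanon_unique h2 ht₁ ht₂ c₁ c₂
        obtain ⟨keyt, keyi⟩ := key
        subst keyt
        subst keyi
        have hpre : L₁ = L₂ := by
          apply ih L₁ L₂ t₁ (by simp at hlen; omega) hL₁ hL₂
          intro w hw
          by_cases hwv : w = v
          · subst hwv
            rw [N.bitsAux_high_rank hL₁ hr₁, N.bitsAux_high_rank hL₂ hr₂]
          · have hb := hbits w hw
            rw [N.bitsAux_concat L₁ w hL₁ hr₁, N.bitsAux_concat L₂ w hL₂ hr₂,
              if_neg hwv, if_neg hwv] at hb
            exact hb
        rw [hpre]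

end PhyloNet
end Aux5

section Aux6
open Classical

namespace PhyloNet
variable (N : PhyloNet)

lemma indeg_pos (hbin : N.IsBinary) {v : N.V} (h : v ≠ N.root) : 0 < N.indeg v := by
  rcases hbin.2.2 v h with ⟨h1, _⟩ | ⟨h1, _⟩ | ⟨h1, _⟩ <;> omega

lemma hyb_eq_two (hbin : N.IsBinary) {v : N.V} (h : 2 ≤ N.indeg v) : N.indeg v = 2 := by
  have hroot : v ≠ N.root := by
    intro he; rw [he, hbin.1] at h; omega
  rcases hbin.2.2 v hroot with ⟨h1, _⟩ | ⟨h1, _⟩ | ⟨h1, _⟩ <;> omega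

lemma outdeg_pos (hbin : N.IsBinary) {x : N.V} (hx : N.SingleLeaf x) {v : N.V} (h : v ≠ x) :
    0 < N.outdeg v := by
  by_cases hr : v = N.root
  · rw [hr, hbin.2.1]; omega
  · rcases hbin.2.2 v hr with ⟨h1, h2⟩ | ⟨_, h2⟩ | ⟨_, h2⟩
    · exact absurd (hx.2 v ⟨h1, h2⟩) h
    · omega
    · omega

lemma to_x_aux (hbin : N.IsBinary) {x : N.V} (hx : N.SingleLeaf x) :
    ∀ (k : ℕ) (v : N.V), N.maxR + 1 - N.rank v ≤ k → Nonempty (PathIn N.V N.arcs v x) := by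
  intro k
  induction k with
  | zero =>
    intro v hv
    have := N.rank_le_maxR v
    omega
  | succ k ih =>
    intro v hv
    by_cases h : v = x
    · subst h
      exact ⟨.nil v⟩
    · have hout : 0 < N.outdeg v := N.outdeg_pos hbin hx h
      have hw : ∃ w, 0 < N.arcs v w := by
        by_contra hc
        push_neg at hc
        have : N.outdeg v = 0 := Finset.sum_eq_zero (fun u _ => by have := hc u; omega)
        omega
      obtain ⟨w, hw⟩ := hw
      have h1 := N.rank_lt v w hw
      have h2 := N.rank_le_maxR w
      obtain ⟨q⟩ := ih w (by omega)
      exact ⟨.cons ⟨0, hw⟩ q⟩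

lemma to_x (hbin : N.IsBinary) {x : N.V} (hx : N.SingleLeaf x) (v : N.V) :
    Nonempty (PathIn N.V N.arcs v x) :=
  N.to_x_aux hbin hx (N.maxR + 1) v (by omega)

/-- Prepend the canonical root-to-`v` path to a path starting at `v`. -/
noncomputable def up (hbin : N.IsBinary) {w : N.V} :
    (v : N.V) → PathIn N.V N.arcs v w → PathIn N.V N.arcs N.root w
  | v, q =>
    if h : v = N.root then h ▸ q
    else up hbin (N.par v) (.cons ⟨0, N.par_spec (N.indeg_pos hbin h)⟩ q)
termination_by v _ => N.rank v
decreasing_by exact N.rank_lt _ _ (N.par_spec (N.indeg_pos hbin h))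

/-- The head of the first non-canonical arc along a path, if any. -/
noncomputable def fnc : {u v : N.V} → PathIn N.V N.arcs u v → Option N.V
  | _, _, .nil _ => none
  | u, _, .cons (v := b) e p => if u = N.par b ∧ (e : ℕ) = 0 then fnc p else some b

lemma fnc_up (hbin : N.IsBinary) :
    ∀ (k : ℕ) (v : N.V), N.rank v ≤ k → ∀ {w : N.V} (q : PathIn N.V N.arcs v w),
      N.fnc (N.up hbin v q) = N.fnc q := by
  intro k
  induction k using Nat.strong_induction_on with
  | _ k ih =>
    intro v hv w q
    rw [up]
    split
    · rename_i h
      subst h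
      rfl
    · rename_i h
      have h1 : N.rank (N.par v) < N.rank v := N.rank_lt _ _ (N.par_spec (N.indeg_pos hbin h))
      rw [ih (N.rank (N.par v)) (by omega) (N.par v) le_rfl]
      rw [fnc, if_pos ⟨rfl, rfl⟩]

end PhyloNet
end Aux6

/-- a binary phylogenetic network with exactly one leaf `x` and exactly `h`
hybrid vertices has at least `h + 1` and at most `2 ^ h` root-to-leaf directed paths. -/
theorem stmt19 (N : PhyloNet) (hbin : N.IsBinary) (x : N.V) (hx : N.SingleLeaf x) :
    N.hybridCard + 1 ≤ N.pathCount N.root x ∧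
    N.pathCount N.root x ≤ 2 ^ N.hybridCard := by
  classical
  constructor
  · -- lower bound
    rw [PhyloNet.pathCount, PhyloNet.hybridCard]
    have harc : ∀ u : {v : N.V // 2 ≤ N.indeg v},
        ∃ t i, i < N.arcs t u.val ∧ ¬(t = N.par u.val ∧ i = 0) :=
      fun u => N.noncanon_exists (N.hyb_eq_two hbin u.2)
    choose t i hti hnc using harc
    have hS : ∀ v : N.V, PathIn N.V N.arcs v x := fun v => Classical.choice (N.to_x hbin hx v)
    set F : Option {v : N.V // 2 ≤ N.indeg v} → PathIn N.V N.arcs N.root x := fun o =>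
      match o with
      | none => N.up hbin x (.nil x)
      | some u => N.up hbin (t u) (.cons ⟨i u, hti u⟩ (hS u.val)) with hFdef
    have hF : ∀ o, N.fnc (F o) = Option.map Subtype.val o := by
      intro o
      match o with
      | none =>
        show N.fnc (N.up hbin x (.nil x)) = none
        rw [N.fnc_up hbin (N.rank x) x le_rfl]
        rfl
      | some u =>
        show N.fnc (N.up hbin (t u) (.cons ⟨i u, hti u⟩ (hS u.val))) = some u.val
        rw [N.fnc_up hbin (N.rank (t u)) (t u) le_rfl]
        simp only [PhyloNet.fnc]
        rw [if_neg]
        exact hnc u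
    have hinj : Function.Injective F := by
      intro a b hab
      have h2 := congrArg N.fnc hab
      rw [hF, hF] at h2
      exact Option.map_injective Subtype.val_injective h2
    have hcard := Nat.card_le_card_of_injective F hinj
    have hopt : Nat.card (Option {v : N.V // 2 ≤ N.indeg v}) =
        Nat.card {v : N.V // 2 ≤ N.indeg v} + 1 := by
      haveI := Fintype.ofFinite {v : N.V // 2 ≤ N.indeg v}
      simp [Nat.card_eq_fintype_card]
    omega
  · -- upper bound
    rw [PhyloNet.pathCount, PhyloNet.hybridCard]
    have hinj : Function.Injective (fun (p : PathIn N.V N.arcs N.root x) =>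
        fun w : {v : N.V // 2 ≤ N.indeg v} => N.bitsAux N.root p.toList w.val) := by
      intro p q h
      apply PathIn.toList_injective
      apply N.list_inj hbin p.toList.length _ _ x le_rfl (N.valid_toList p) (N.valid_toList q)
      intro w hw
      exact congrFun h ⟨w, hw⟩
    have hcard := Nat.card_le_card_of_injective _ hinj
    have hfun : Nat.card ({v : N.V // 2 ≤ N.indeg v} → Bool) =
        2 ^ Nat.card {v : N.V // 2 ≤ N.indeg v} := by
      rw [Nat.card_fun]
      congr 1
      simp [Nat.card_eq_fintype_card]
    omega
end
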